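/- arXiv:1303.6882 — 7 statements merged into one kernel-verified Lean document; each statement's English description precedes it below -/
import Mathlib

section
/- For α ∈ (0,1) and λ > α - 1, the integral ∫₀¹ (1 - (1-x)^λ) x^(α-2) (1-x)^(-α) dx equals λ · Γ(α) Γ(λ+1-α) / ((1-α) Γ(λ+1)). -/
/-!
With `f x = (1 - (1 - x) ^ λ) x ^ (α - 2) (1 - x) ^ (-α)`, the function
`G x = (1 - (1 - x) ^ λ) x ^ (α - 1) (1 - x) ^ (1 - α)` satisfies
`G' = λ x ^ (α - 1) (1 - x) ^ (λ - α) - (1 - α) f` on `(0, 1)`, and `G` tends to `0` at both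
endpoints (at `0` because `1 - (1 - x) ^ λ ~ λ x`, at `1` because `1 - α` and `λ + 1 - α` are
positive). Hence `(1 - α) ∫₀¹ f = λ B(α, λ + 1 - α)`, and the beta integral is evaluated by Gamma functions.
-/

open Real MeasureTheory Set Filter Topology

lemma intervalIntegrable_rpow_mul_one_sub_rpow {p q : ℝ} (hp : -1 < p) (hq : -1 < q) :
    IntervalIntegrable (fun x : ℝ => x ^ p * (1 - x) ^ q) volume 0 1 := by
  refine IntervalIntegrable.trans (b := 1 / 2) ?_ ?_
  · refine (intervalIntegral.intervalIntegrable_rpow' hp).mul_continuousOn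
      (ContinuousOn.rpow_const (by fun_prop) fun x hx => Or.inl ?_)
    rw [uIcc_of_le (by norm_num)] at hx
    linarith [hx.2]
  · have h : IntervalIntegrable (fun x : ℝ => (1 - x) ^ q) volume (1 / 2) 1 := by
      have hrefl :=
        (intervalIntegral.intervalIntegrable_rpow' (a := 0) (b := 1 / 2) hq).comp_sub_left 1
      norm_num at hrefl
      exact hrefl.symm
    refine h.continuousOn_mul (ContinuousOn.rpow_const (by fun_prop) fun x hx => Or.inl ?_)
    rw [uIcc_of_le (by norm_num)] at hx
    linarith [hx.1]

lemma integral_rpow_mul_one_sub_rpow {p q : ℝ} (hp : 0 < p) (hq : 0 < q) :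
    ∫ x in (0:ℝ)..1, x ^ (p - 1) * (1 - x) ^ (q - 1)
      = Gamma p * Gamma q / Gamma (p + q) := by
  have hbeta : Complex.betaIntegral p q
      = ((∫ x in (0:ℝ)..1, x ^ (p - 1) * (1 - x) ^ (q - 1) : ℝ) : ℂ) := by
    rw [Complex.betaIntegral, ← intervalIntegral.integral_ofReal]
    refine intervalIntegral.integral_congr fun x hx => ?_
    rw [uIcc_of_le zero_le_one] at hx
    push_cast
    rw [Complex.ofReal_cpow hx.1, Complex.ofReal_cpow (by linarith [hx.2])]
    push_cast
    ring
  have h := Complex.Gamma_mul_Gamma_eq_betaIntegral (s := p) (t := q)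
    (by simpa using hp) (by simpa using hq)
  rw [hbeta, ← Complex.ofReal_add, Complex.Gamma_ofReal, Complex.Gamma_ofReal,
    Complex.Gamma_ofReal, ← Complex.ofReal_mul, ← Complex.ofReal_mul, Complex.ofReal_inj] at h
  rw [h, mul_div_cancel_left₀ _ (Gamma_pos_of_pos (add_pos hp hq)).ne']

lemma abs_one_sub_one_sub_rpow_le {x lam : ℝ} (hx0 : 0 ≤ x) (hx1 : x < 1) (hlam : -1 ≤ lam) :
    |1 - (1 - x) ^ lam| ≤ max 1 lam * x + x * (1 - x) ^ lam := by
  have h1x : 0 < 1 - x := by linarith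
  have hupper : 1 - (1 - x) ^ lam ≤ max 1 lam * x := by
    rcases le_or_gt lam 1 with h | h
    · have h2 : (1 - x) ^ (1:ℝ) ≤ (1 - x) ^ lam := rpow_le_rpow_of_exponent_ge h1x (by linarith) h
      rw [rpow_one] at h2
      nlinarith [le_max_left 1 lam]
    · have h2 := one_add_mul_self_le_rpow_one_add (by linarith : (-1:ℝ) ≤ -x) h.le
      rw [← sub_eq_add_neg] at h2
      nlinarith [le_max_right 1 lam]
  have hlower : (1 - x) ^ lam - 1 ≤ x * (1 - x) ^ lam := by
    have h2 : (1 - x) ^ (lam + 1) ≤ 1 := rpow_le_one h1x.le (by linarith) (by linarith)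
    rw [rpow_add_one h1x.ne'] at h2
    linarith
  have : 0 ≤ x * (1 - x) ^ lam := by positivity
  have : 0 ≤ max 1 lam * x := mul_nonneg (le_max_of_le_left zero_le_one) hx0
  rw [abs_le]
  constructor <;> linarith

lemma intervalIntegrable_one_sub_one_sub_rpow_mul {α lam : ℝ} (hα0 : 0 < α) (hα1 : α < 1)
    (hlam : α - 1 < lam) :
    IntervalIntegrable (fun x : ℝ => (1 - (1 - x) ^ lam) * x ^ (α - 2) * (1 - x) ^ (-α))
      volume 0 1 := by
  set C := max 1 lam
  have hbound := ((intervalIntegrable_rpow_mul_one_sub_rpow (p := α - 1) (q := -α)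
    (by linarith) (by linarith)).const_mul C).add
    (intervalIntegrable_rpow_mul_one_sub_rpow (p := α - 1) (q := lam - α) (by linarith)
      (by linarith))
  rw [intervalIntegrable_iff_integrableOn_Ioo_of_le zero_le_one] at hbound ⊢
  refine hbound.mono' (by fun_prop : Measurable _).aestronglyMeasurable ?_
  rw [ae_restrict_iff' measurableSet_Ioo]
  filter_upwards with x ⟨hx0, hx1⟩
  have h1x : 0 < 1 - x := by linarith
  have hx : x ^ (α - 1) = x ^ (α - 2) * x := by
    rw [show α - 1 = α - 2 + 1 by ring, rpow_add_one hx0.ne']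
  have h1x' : (1 - x) ^ (lam - α) = (1 - x) ^ lam * (1 - x) ^ (-α) := by
    rw [← rpow_add h1x, ← sub_eq_add_neg]
  calc ‖(1 - (1 - x) ^ lam) * x ^ (α - 2) * (1 - x) ^ (-α)‖
      = |1 - (1 - x) ^ lam| * (x ^ (α - 2) * (1 - x) ^ (-α)) := by
        rw [norm_mul, norm_mul, norm_of_nonneg (rpow_nonneg hx0.le (α - 2)),
          norm_of_nonneg (rpow_nonneg h1x.le (-α)), norm_eq_abs, mul_assoc]
    _ ≤ (C * x + x * (1 - x) ^ lam) * (x ^ (α - 2) * (1 - x) ^ (-α)) := by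
        gcongr
        exact abs_one_sub_one_sub_rpow_le hx0.le hx1 (by linarith)
    _ = C * (x ^ (α - 1) * (1 - x) ^ (-α)) + x ^ (α - 1) * (1 - x) ^ (lam - α) := by
        rw [hx, h1x']
        ring

lemma hasDerivAt_one_sub_one_sub_rpow_mul {α lam x : ℝ} (hx0 : 0 < x) (hx1 : x < 1) :
    HasDerivAt (fun y : ℝ => (1 - (1 - y) ^ lam) * y ^ (α - 1) * (1 - y) ^ (1 - α))
      (lam * (x ^ (α - 1) * (1 - x) ^ (lam - α))
        - (1 - α) * ((1 - (1 - x) ^ lam) * x ^ (α - 2) * (1 - x) ^ (-α))) x := by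
  have h1x : 0 < 1 - x := by linarith
  have hsub : HasDerivAt (fun y : ℝ => 1 - y) (-1) x := by
    simpa using (hasDerivAt_id x).const_sub 1
  have hu : HasDerivAt (fun y : ℝ => 1 - (1 - y) ^ lam) (lam * (1 - x) ^ (lam - 1)) x :=
    ((hsub.rpow_const (Or.inl h1x.ne')).const_sub 1).congr_deriv (by ring)
  have hv : HasDerivAt (fun y : ℝ => y ^ (α - 1)) ((α - 1) * x ^ (α - 2)) x := by
    simpa [sub_sub, one_add_one_eq_two] using hasDerivAt_rpow_const (p := α - 1) (Or.inl hx0.ne')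
  have hw : HasDerivAt (fun y : ℝ => (1 - y) ^ (1 - α)) (-((1 - α) * (1 - x) ^ (-α))) x :=
    (hsub.rpow_const (Or.inl h1x.ne')).congr_deriv (by ring_nf)
  refine ((hu.mul hv).mul hw).congr_deriv ?_
  have ex : x ^ (α - 1) = x ^ (α - 2) * x := by
    rw [← rpow_add_one hx0.ne']; ring_nf
  have ew : (1 - x) ^ (1 - α) = (1 - x) ^ (-α) * (1 - x) := by
    rw [← rpow_add_one h1x.ne']; ring_nf
  have eu : (1 - x) ^ lam = (1 - x) ^ (lam - 1) * (1 - x) := by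
    rw [← rpow_add_one h1x.ne']; ring_nf
  have eβ : (1 - x) ^ (lam - α) = (1 - x) ^ (lam - 1) * ((1 - x) ^ (-α) * (1 - x)) := by
    rw [← rpow_add_one h1x.ne', ← rpow_add h1x]; ring_nf
  simp only [Pi.mul_apply]
  rw [ex, ew, eu, eβ]
  ring

lemma tendsto_one_sub_one_sub_rpow_mul_nhdsGT_zero {α lam : ℝ} (hα : 0 < α) :
    Tendsto (fun x : ℝ => (1 - (1 - x) ^ lam) * x ^ (α - 1) * (1 - x) ^ (1 - α)) (𝓝[>] 0) (𝓝 0) := by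
  have hderiv : HasDerivAt (fun y : ℝ => 1 - (1 - y) ^ lam) lam 0 := by
    have hsub : HasDerivAt (fun y : ℝ => 1 - y) (-1) 0 := by
      simpa using (hasDerivAt_id (0:ℝ)).const_sub 1
    simpa using (hsub.rpow_const (p := lam) (by norm_num)).const_sub 1
  have hslope : Tendsto (fun x : ℝ => (1 - (1 - x) ^ lam) / x) (𝓝[>] 0) (𝓝 lam) := by
    refine ((hasDerivAt_iff_tendsto_slope.mp hderiv).mono_left
      (nhdsWithin_mono 0 fun x hx => ne_of_gt hx)).congr fun x => ?_
    simp [slope_def_field]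
  have hpow : Tendsto (fun x : ℝ => x ^ α) (𝓝[>] 0) (𝓝 0) := by
    simpa [zero_rpow hα.ne'] using
      (continuousAt_rpow_const 0 α (Or.inr hα.le)).tendsto.mono_left nhdsWithin_le_nhds
  have hone : Tendsto (fun x : ℝ => (1 - x) ^ (1 - α)) (𝓝[>] 0) (𝓝 1) := by
    have h : ContinuousAt (fun x : ℝ => (1 - x) ^ (1 - α)) 0 :=
      ContinuousAt.rpow_const (by fun_prop) (by norm_num)
    simpa using h.tendsto.mono_left nhdsWithin_le_nhds
  simpa using ((hslope.mul hpow).mul hone).congr' <| by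
    filter_upwards [self_mem_nhdsWithin] with x (hx : 0 < x)
    rw [sub_eq_add_neg α, rpow_add hx, rpow_neg_one]
    field_simp

lemma tendsto_one_sub_rpow_nhds_one {p : ℝ} (hp : 0 < p) :
    Tendsto (fun x : ℝ => (1 - x) ^ p) (𝓝 1) (𝓝 0) := by
  have h : ContinuousAt (fun x : ℝ => (1 - x) ^ p) 1 :=
    ContinuousAt.rpow_const (by fun_prop) (Or.inr hp.le)
  simpa [zero_rpow hp.ne'] using h.tendsto

lemma tendsto_one_sub_one_sub_rpow_mul_nhdsLT_one {α lam : ℝ} (hα : α < 1) (hlam : α - 1 < lam) :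
    Tendsto (fun x : ℝ => (1 - (1 - x) ^ lam) * x ^ (α - 1) * (1 - x) ^ (1 - α)) (𝓝[<] 1) (𝓝 0) := by
  have hpow : Tendsto (fun x : ℝ => x ^ (α - 1)) (𝓝 1) (𝓝 1) := by
    simpa using (continuousAt_rpow_const 1 (α - 1) (Or.inl one_ne_zero)).tendsto
  have h : Tendsto (fun x : ℝ => x ^ (α - 1) * ((1 - x) ^ (1 - α) - (1 - x) ^ (lam + 1 - α)))
      (𝓝[<] 1) (𝓝 (1 * (0 - 0))) :=
    (hpow.mul ((tendsto_one_sub_rpow_nhds_one (by linarith)).sub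
      (tendsto_one_sub_rpow_nhds_one (by linarith)))).mono_left nhdsWithin_le_nhds
  simpa using h.congr' <| by
    filter_upwards [self_mem_nhdsWithin] with x (hx : x < 1)
    rw [show lam + 1 - α = lam + (1 - α) by ring, rpow_add (by linarith)]
    ring

theorem stmt_0 (α lam : ℝ) (hα : α ∈ Set.Ioo (0:ℝ) 1) (hlam : lam > α - 1) :
    ∫ x in (0:ℝ)..1, (1 - (1 - x) ^ lam) * x ^ (α - 2) * (1 - x) ^ (-α)
      = lam * Real.Gamma α * Real.Gamma (lam + 1 - α)
        / ((1 - α) * Real.Gamma (lam + 1)) := by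
  obtain ⟨hα0, hα1⟩ := hα
  have hβ := intervalIntegrable_rpow_mul_one_sub_rpow (p := α - 1) (q := lam - α)
    (by linarith) (by linarith)
  have hf := intervalIntegrable_one_sub_one_sub_rpow_mul hα0 hα1 hlam
  have hFTC := intervalIntegral.integral_eq_sub_of_hasDerivAt_of_tendsto one_pos
    (fun x hx => hasDerivAt_one_sub_one_sub_rpow_mul hx.1 hx.2)
    ((hβ.const_mul lam).sub (hf.const_mul (1 - α)))
    (tendsto_one_sub_one_sub_rpow_mul_nhdsGT_zero hα0)
    (tendsto_one_sub_one_sub_rpow_mul_nhdsLT_one hα1 hlam)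
  rw [intervalIntegral.integral_sub (hβ.const_mul lam) (hf.const_mul (1 - α)),
    intervalIntegral.integral_const_mul, intervalIntegral.integral_const_mul, sub_self,
    sub_eq_zero] at hFTC
  have hB := integral_rpow_mul_one_sub_rpow hα0 (q := lam + 1 - α) (by linarith)
  rw [show lam + 1 - α - 1 = lam - α by ring, add_sub_cancel] at hB
  rw [hB] at hFTC
  have hG := (Gamma_pos_of_pos (show 0 < lam + 1 by linarith)).ne'
  rw [eq_div_iff (mul_ne_zero (by linarith) hG)]
  field_simp at hFTC
  linear_combination -hFTC
end

section
/- For α ∈ (0,1) and an integer n ≥ 2, one has ∫₀¹ (1 - (1-u)^n - n·u·(1-u)^(n-1)) u^(α-2) (1-u)^(-α) du = (n-1) · (α/(1-α)) · Γ(α) Γ(n-α) / Γ(n). -/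
/-!
With `y = 1 - u`, the numerator `1 - yⁿ - n (1 - y) yⁿ⁻¹` is the Taylor remainder of `yⁿ`
at `y = 1`, namely `(1 - y)² ∑_{m < n-1} (m + 1) yᵐ`. The factor `u²` absorbs the singularity
at `0`, so the integral is `∑_{m < n-1} (m + 1) B(α + 1, m + 1 - α)`, and the recurrences
`B(a + 1, b) = a / (a + b) B(a, b)`, `B(a, b + 1) = b / (a + b) B(a, b)` sum this by induction
to `(n - 1) α / (1 - α) B(α, n - α)`.
-/

open Real
open MeasureTheory ProbabilityTheory Set

lemma ofReal_rpow_mul_one_sub_rpow {x : ℝ} (hx : x ∈ Icc 0 1) (a b : ℝ) :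
    ((x ^ (a - 1) * (1 - x) ^ (b - 1) : ℝ) : ℂ)
      = (x : ℂ) ^ ((a : ℂ) - 1) * (1 - (x : ℂ)) ^ ((b : ℂ) - 1) := by
  have h1x : 0 ≤ 1 - x := by linarith [hx.2]
  rw [Complex.ofReal_mul, Complex.ofReal_cpow hx.1, Complex.ofReal_cpow h1x]
  push_cast
  rfl

lemma intervalIntegrable_rpow_mul_one_sub_rpow_s3 {a b : ℝ} (ha : 0 < a) (hb : 0 < b) :
    IntervalIntegrable (fun u : ℝ => u ^ (a - 1) * (1 - u) ^ (b - 1)) volume 0 1 := by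
  refine (Complex.betaIntegral_convergent (u := a) (v := b) (by simpa) (by simpa)).norm.congr
    fun x hx => ?_
  rw [uIoc_of_le zero_le_one] at hx
  have h1x : 0 ≤ 1 - x := by linarith [hx.2]
  simp only [← ofReal_rpow_mul_one_sub_rpow (Ioc_subset_Icc_self hx), Complex.norm_real,
    norm_eq_abs]
  exact abs_of_nonneg (mul_nonneg (rpow_nonneg hx.1.le _) (rpow_nonneg h1x _))

lemma integral_rpow_mul_one_sub_rpow_s3 {a b : ℝ} (ha : 0 < a) (hb : 0 < b) :
    ∫ u in (0 : ℝ)..1, u ^ (a - 1) * (1 - u) ^ (b - 1) = beta a b := by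
  rw [beta_eq_betaIntegralReal a b ha hb, Complex.betaIntegral,
    ← Complex.ofReal_re (∫ _ in _.._, _), ← intervalIntegral.integral_ofReal]
  congr 1
  refine intervalIntegral.integral_congr fun x hx => ?_
  rw [uIcc_of_le zero_le_one] at hx
  exact ofReal_rpow_mul_one_sub_rpow hx a b

lemma beta_add_one_left {a b : ℝ} (ha : a ≠ 0) (hab : a + b ≠ 0) :
    beta (a + 1) b = a / (a + b) * beta a b := by
  rw [beta, beta, Gamma_add_one ha, add_right_comm, Gamma_add_one hab]
  field_simp

lemma beta_add_one_right {a b : ℝ} (hb : b ≠ 0) (hab : a + b ≠ 0) :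
    beta a (b + 1) = b / (a + b) * beta a b := by
  rw [beta, beta, Gamma_add_one hb, ← add_assoc, Gamma_add_one hab]
  field_simp

lemma one_sub_pow_succ_sub_eq_sq_mul_sum {R : Type*} [CommRing R] (y : R) (N : ℕ) :
    1 - y ^ (N + 1) - (N + 1) * (1 - y) * y ^ N
      = (1 - y) ^ 2 * ∑ m ∈ Finset.range N, ((m : R) + 1) * y ^ m := by
  induction N with
  | zero => simp
  | succ N ih =>
    rw [Finset.sum_range_succ]
    push_cast
    linear_combination ih

lemma sum_mul_beta_add_one_left {α : ℝ} (h0 : 0 < α) (h1 : α < 1) (N : ℕ) :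
    ∑ m ∈ Finset.range N, ((m : ℝ) + 1) * beta (α + 1) (m + 1 - α)
      = N * (α / (1 - α)) * beta α (N + 1 - α) := by
  induction N with
  | zero => simp
  | succ N ih =>
    have hb : (N : ℝ) + 1 - α ≠ 0 := by linarith [(N.cast_nonneg : (0 : ℝ) ≤ N)]
    have hab : α + ((N : ℝ) + 1 - α) ≠ 0 := by rw [add_sub_cancel]; positivity
    rw [Finset.sum_range_succ, ih, beta_add_one_left h0.ne' hab, Nat.cast_succ,
      show (N : ℝ) + 1 + 1 - α = (N + 1 - α) + 1 by ring, beta_add_one_right hb hab]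
    have : 1 - α ≠ 0 := by linarith
    field_simp
    ring

lemma integrand_eq_sum_beta_integrands (α : ℝ) (N : ℕ) {u : ℝ} (hu : u ∈ Ioo 0 1) :
    (1 - (1 - u) ^ ((N + 1 : ℕ) : ℝ)
          - ((N + 1 : ℕ) : ℝ) * u * (1 - u) ^ (((N + 1 : ℕ) : ℝ) - 1))
        * u ^ (α - 2) * (1 - u) ^ (-α)
      = ∑ m ∈ Finset.range N,
          ((m : ℝ) + 1) * (u ^ ((α + 1) - 1) * (1 - u) ^ ((m + 1 - α) - 1)) := by
  have h1u : 0 < 1 - u := by linarith [hu.2]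
  have key := one_sub_pow_succ_sub_eq_sq_mul_sum (1 - u) N
  rw [sub_sub_cancel] at key
  rw [rpow_natCast, Nat.cast_succ, add_sub_cancel_right, rpow_natCast, key, Finset.mul_sum,
    Finset.sum_mul, Finset.sum_mul]
  refine Finset.sum_congr rfl fun m _ => ?_
  have hu_pow : u ^ ((α + 1) - 1) = u ^ (α - 2) * u ^ 2 := by
    rw [← rpow_natCast, ← rpow_add hu.1]
    norm_num
  have h1u_pow : (1 - u) ^ (((m : ℝ) + 1 - α) - 1) = (1 - u) ^ m * (1 - u) ^ (-α) := by
    rw [← rpow_natCast, ← rpow_add h1u]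
    ring_nf
  rw [hu_pow, h1u_pow]
  ring

theorem stmt_3 (α : ℝ) (hα : α ∈ Set.Ioo (0:ℝ) 1) (n : ℕ) (hn : 2 ≤ n) :
    ∫ u in (0:ℝ)..1,
        (1 - (1 - u) ^ (n : ℝ) - n * u * (1 - u) ^ ((n : ℝ) - 1))
          * u ^ (α - 2) * (1 - u) ^ (-α)
      = ((n : ℝ) - 1) * (α / (1 - α)) * Real.Gamma α * Real.Gamma ((n : ℝ) - α)
        / Real.Gamma n := by
  obtain ⟨h0, h1⟩ := hα
  obtain ⟨N, rfl⟩ : ∃ N, n = N + 1 := ⟨n - 1, by omega⟩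
  have hb (m : ℕ) : 0 < (m : ℝ) + 1 - α := by linarith [(m.cast_nonneg : (0 : ℝ) ≤ m)]
  calc _ = ∫ u in (0 : ℝ)..1, ∑ m ∈ Finset.range N,
          ((m : ℝ) + 1) * (u ^ ((α + 1) - 1) * (1 - u) ^ ((m + 1 - α) - 1)) := by
        refine intervalIntegral.integral_congr_ae ?_
        filter_upwards [volume.ae_ne 1] with u hu1 hu
        rw [uIoc_of_le zero_le_one] at hu
        exact integrand_eq_sum_beta_integrands α N ⟨hu.1, lt_of_le_of_ne hu.2 hu1⟩
    _ = ∑ m ∈ Finset.range N, ((m : ℝ) + 1) * beta (α + 1) (m + 1 - α) := by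
        rw [intervalIntegral.integral_finsetSum fun m _ =>
          (intervalIntegrable_rpow_mul_one_sub_rpow_s3 (by linarith) (hb m)).const_mul _]
        refine Finset.sum_congr rfl fun m _ => ?_
        rw [intervalIntegral.integral_const_mul,
          integral_rpow_mul_one_sub_rpow_s3 (by linarith) (hb m)]
    _ = N * (α / (1 - α)) * beta α (N + 1 - α) := sum_mul_beta_add_one_left h0 h1 N
    _ = _ := by
        rw [beta, add_sub_cancel, Nat.cast_succ, add_sub_cancel_right]
        ring
end

section
/- For α ∈ (0,1) and n ≥ 2, the ratio of the n-th Taylor coefficient of 1 - t - (1-t)^(1-α) to the n-th Taylor coefficient of 1 - (1-t)^α equals ((1-α)/α) · (Γ(1-α)/Γ(α)) · Γ(n-1+α)/Γ(n-α). -/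
/-!
For `n ≥ 2` the affine part `1 - t` does not contribute, so both `n`-th derivatives at `0` are
`-(-1)ⁿ` times the falling factorial `c (c - 1) ⋯ (c - n + 1)`, for `c = 1 - α` and `c = α`.
For `c < 1` that factorial equals `(-1)ⁿ⁻¹ c Γ(n - c) / Γ(1 - c)`, and the ratio of the two values
is the stated product of Gamma quotients.
-/

open Real

open Polynomial in
theorem Real.Gamma_add_nat_eq_ascPochhammer_mul {x : ℝ} (hx : 0 < x) (n : ℕ) :
    Gamma (x + n) = (ascPochhammer ℝ n).eval x * Gamma x := by
  induction n with
  | zero => simp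
  | succ n ih =>
    rw [Nat.cast_succ, ← add_assoc, Gamma_add_one (by positivity), ih, ascPochhammer_succ_eval]
    ring

open Polynomial in
theorem descPochhammer_succ_eval_eq_Gamma {c : ℝ} (hc : c < 1) (n : ℕ) :
    (descPochhammer ℝ (n + 1)).eval c = (-1) ^ n * c * (Gamma (1 - c + n) / Gamma (1 - c)) := by
  have hΓ : Gamma (1 - c) ≠ 0 := (Gamma_pos_of_pos (by linarith)).ne'
  have h := ascPochhammer_eval_neg_eq_descPochhammer ℝ (c - 1) n
  rw [neg_sub] at h
  rw [descPochhammer_succ_left, eval_mul, eval_X, eval_comp, eval_sub, eval_X, eval_one,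
    Gamma_add_nat_eq_ascPochhammer_mul (by linarith), h, mul_div_assoc, div_self hΓ, mul_one,
    mul_mul_mul_comm, ← pow_add, Even.neg_one_pow ⟨n, rfl⟩, one_mul]

theorem iteratedDeriv_one_sub_rpow (c t : ℝ) (n : ℕ) :
    iteratedDeriv n (fun s : ℝ => (1 - s) ^ c) t
      = (-1) ^ n * (descPochhammer ℝ n).eval c * (1 - t) ^ (c - n) := by
  rw [iteratedDeriv_comp_const_sub n (fun x : ℝ => x ^ c), iteratedDeriv_eq_iterate]
  simp only [iter_deriv_rpow_const, smul_eq_mul, mul_assoc]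

theorem iteratedDeriv_one_sub_rpow_zero (c : ℝ) (n : ℕ) :
    iteratedDeriv n (fun s : ℝ => (1 - s) ^ c) 0 = (-1) ^ n * (descPochhammer ℝ n).eval c := by
  simp [iteratedDeriv_one_sub_rpow]

theorem iteratedDeriv_one_sub_one_sub_rpow_zero (c : ℝ) {n : ℕ} (hn : 1 ≤ n) :
    iteratedDeriv n (fun t : ℝ => 1 - (1 - t) ^ c) 0
      = -((-1) ^ n * (descPochhammer ℝ n).eval c) := by
  rw [iteratedDeriv_const_sub hn, iteratedDeriv_neg, iteratedDeriv_one_sub_rpow_zero]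

theorem iteratedDeriv_one_sub_sub_rpow_zero (c : ℝ) {n : ℕ} (hn : 2 ≤ n) :
    iteratedDeriv n (fun t : ℝ => 1 - t - (1 - t) ^ c) 0
      = -((-1) ^ n * (descPochhammer ℝ n).eval c) := by
  have hlin : ContDiffAt ℝ n (fun t : ℝ => 1 - t) 0 := by fun_prop
  have hpow : ContDiffAt ℝ n (fun t : ℝ => (1 - t) ^ c) 0 :=
    (contDiffAt_rpow_const (by norm_num)).comp 0 hlin
  rw [iteratedDeriv_fun_sub hlin hpow, iteratedDeriv_const_sub (by omega), iteratedDeriv_neg,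
    iteratedDeriv_fun_id_zero, iteratedDeriv_one_sub_rpow_zero]
  simp [show n ≠ 1 by omega]

theorem stmt_11 (α : ℝ) (hα : α ∈ Set.Ioo (0:ℝ) 1) (n : ℕ) (hn : 2 ≤ n) :
    (iteratedDeriv n (fun t : ℝ => 1 - t - (1 - t) ^ (1 - α)) 0 / (n.factorial : ℝ))
        / (iteratedDeriv n (fun t : ℝ => 1 - (1 - t) ^ α) 0 / (n.factorial : ℝ))
      = ((1 - α) / α) * (Real.Gamma (1 - α) / Real.Gamma α)
          * (Real.Gamma ((n : ℝ) - 1 + α) / Real.Gamma ((n : ℝ) - α)) := by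
  obtain ⟨hα0, hα1⟩ := hα
  obtain ⟨m, rfl⟩ : ∃ m, n = m + 1 := ⟨n - 1, by omega⟩
  have hfac : ((m + 1).factorial : ℝ) ≠ 0 := by positivity
  have hsign : -(-1 : ℝ) ^ (m + 1) ≠ 0 := by simp
  rw [iteratedDeriv_one_sub_sub_rpow_zero _ hn,
    iteratedDeriv_one_sub_one_sub_rpow_zero _ (by omega), div_div_div_cancel_right₀ hfac,
    neg_mul_eq_neg_mul, neg_mul_eq_neg_mul, mul_div_mul_left _ _ hsign,
    descPochhammer_succ_eval_eq_Gamma (by linarith), descPochhammer_succ_eval_eq_Gamma hα1,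
    sub_sub_cancel]
  have hΓα : Gamma α ≠ 0 := (Gamma_pos_of_pos hα0).ne'
  have hΓ1α : Gamma (1 - α) ≠ 0 := (Gamma_pos_of_pos (by linarith)).ne'
  push_cast
  rw [show (m : ℝ) + 1 - 1 + α = α + m by ring, show (m : ℝ) + 1 - α = 1 - α + m by ring]
  field_simp
end

section
/- Let t be a finite rooted plane tree with L(t) ≥ 2 leaves, and let (ξ_u)_{u internal node of t} be independent random variables with P(ξ_u ≥ θ) = (1+θ)^(1-k_u) for θ ≥ 0, where k_u ≥ 2 is the number of children of u. Then for every internal node u, the probability that ξ_u = min over internal nodes v of ξ_v equals (k_u - 1)/(L(t) - 1). -/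
/-!
Conditionally on `ξ u = θ ≥ 0`, independence makes the probability that every other mark is at
least `θ` equal to `(1 + θ) ^ (-β)` with `β = ∑_{v ≠ u} (k v - 1)`. With `α = k u - 1`, the
variable `(1 + ξ u) ^ (-α)` is uniform on `(0, 1]`, so the answer is
`E[(1 + ξ u) ^ (-β)] = ∫₀¹ s ^ (β / α) ds = α / (α + β)`, and `α + β = L - 1`.
-/

open MeasureTheory ProbabilityTheory Set

namespace ProbabilityTheory

lemma IndepFun.measure_preimage_prodMk_eq_lintegral {Ω α β : Type*} [MeasurableSpace Ω]
    [MeasurableSpace α] [MeasurableSpace β] {μ : Measure Ω} [IsFiniteMeasure μ]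
    {X : Ω → α} {Y : Ω → β} (hX : Measurable X) (hY : Measurable Y) (hXY : IndepFun X Y μ)
    {S : Set (α × β)} (hS : MeasurableSet S) :
    μ ((fun ω ↦ (X ω, Y ω)) ⁻¹' S) = ∫⁻ x, μ (Y ⁻¹' (Prod.mk x ⁻¹' S)) ∂(μ.map X) := by
  rw [← Measure.map_apply (hX.prodMk hY) hS,
    hXY.map_prod_eq_prod_map_map hX.aemeasurable hY.aemeasurable, Measure.prod_apply hS]
  exact lintegral_congr fun x ↦ Measure.map_apply hY (measurable_prodMk_left hS)

lemma iIndepFun.measure_forall_le_eq_lintegral {Ω ι : Type*} [MeasurableSpace Ω]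
    {μ : Measure Ω} [Fintype ι] [DecidableEq ι] {ξ : ι → Ω → ℝ}
    (hmeas : ∀ v, Measurable (ξ v)) (hindep : iIndepFun ξ μ) (u : ι) :
    μ {ω | ∀ v, ξ u ω ≤ ξ v ω}
      = ∫⁻ θ, ∏ v ∈ Finset.univ.erase u, μ {ω | θ ≤ ξ v ω} ∂(μ.map (ξ u)) := by
  have := hindep.isProbabilityMeasure
  set T := Finset.univ.erase u
  let Y : Ω → (T → ℝ) := fun ω v ↦ ξ v ω
  have hY : Measurable Y := measurable_pi_lambda _ fun v ↦ hmeas v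
  have hXY : IndepFun (ξ u) Y μ :=
    (hindep.indepFun_finset {u} T (by simp [T]) hmeas).comp
      (measurable_pi_apply (⟨u, Finset.mem_singleton_self u⟩ : ({u} : Finset ι))) measurable_id
  let S : Set (ℝ × (T → ℝ)) := {p | ∀ v, p.1 ≤ p.2 v}
  have hS : MeasurableSet S := by
    simp only [S, ofPred_forall]
    exact .iInter fun v ↦
      measurableSet_le measurable_fst ((measurable_pi_apply v).comp measurable_snd)
  have hE : {ω | ∀ v, ξ u ω ≤ ξ v ω} = (fun ω ↦ (ξ u ω, Y ω)) ⁻¹' S := by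
    ext ω
    simp only [mem_ofPred_eq, mem_preimage, S, Y, T, Subtype.forall, Finset.mem_erase,
      Finset.mem_univ, and_true]
    exact ⟨fun h v _ ↦ h v, fun h v ↦ if hv : v = u then hv ▸ le_rfl else h v hv⟩
  rw [hE, hXY.measure_preimage_prodMk_eq_lintegral (hmeas u) hY hS]
  refine lintegral_congr fun θ ↦ ?_
  have hslice : Y ⁻¹' (Prod.mk θ ⁻¹' S) = ⋂ v ∈ T, ξ v ⁻¹' Ici θ := by
    ext ω
    simp [S, Y]
  rw [hslice, hindep.measure_inter_preimage_eq_mul T fun _ _ ↦ measurableSet_Ici]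
  rfl

end ProbabilityTheory

section Lomax

variable {ν : Measure ℝ} [IsProbabilityMeasure ν] {α : ℝ}

lemma ae_nonneg_of_measure_Ici_eq
    (hν : ∀ θ, 0 ≤ θ → ν (Ici θ) = ENNReal.ofReal ((1 + θ) ^ (-α))) : ∀ᵐ θ ∂ν, 0 ≤ θ := by
  have h : ν (Ici 0) = 1 := by simpa using hν 0 le_rfl
  exact (prob_compl_eq_zero_iff measurableSet_Ici).2 h

lemma map_one_add_rpow_neg_eq_restrict_Ioc (hα : 0 < α)
    (hν : ∀ θ, 0 ≤ θ → ν (Ici θ) = ENNReal.ofReal ((1 + θ) ^ (-α))) :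
    ν.map (fun θ ↦ (1 + θ) ^ (-α)) = volume.restrict (Ioc 0 1) := by
  have hg : Measurable fun θ : ℝ ↦ (1 + θ) ^ (-α) := by fun_prop
  refine Measure.ext_of_Iic _ _ fun s ↦ ?_
  rw [Measure.map_apply hg measurableSet_Iic, Measure.restrict_apply measurableSet_Iic,
    inter_comm, Ioc_inter_Iic, Real.volume_Ioc, sub_zero,
    ← measure_inter_conull (t := Ici 0) (ae_nonneg_of_measure_Ici_eq hν)]
  rcases le_or_gt s 0 with hs | hs
  · have hempty : (fun θ ↦ (1 + θ) ^ (-α)) ⁻¹' Iic s ∩ Ici 0 = ∅ := by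
      refine eq_empty_of_forall_notMem fun θ ⟨hθs, hθ⟩ ↦ ?_
      have : 0 < (1 + θ) ^ (-α) := Real.rpow_pos_of_pos (by linarith [mem_Ici.1 hθ]) _
      exact (this.trans_le hθs).not_ge hs
    rw [hempty, measure_empty, ENNReal.ofReal_of_nonpos (by simp [hs])]
  rcases le_or_gt s 1 with hs1 | hs1
  · have hc : 0 ≤ s ^ (-α)⁻¹ - 1 := by
      linarith [Real.one_le_rpow_of_pos_of_le_one_of_nonpos hs hs1
        (inv_nonpos.2 (neg_nonpos.2 hα.le))]
    have hset : (fun θ ↦ (1 + θ) ^ (-α)) ⁻¹' Iic s ∩ Ici 0 = Ici (s ^ (-α)⁻¹ - 1) := by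
      have key (θ : ℝ) (hθ : 0 ≤ θ) : (1 + θ) ^ (-α) ≤ s ↔ s ^ (-α)⁻¹ - 1 ≤ θ := by
        rw [sub_le_iff_le_add, add_comm θ,
          Real.rpow_inv_le_iff_of_neg hs (by linarith) (neg_lt_zero.2 hα)]
      ext θ
      simp only [mem_inter_iff, mem_preimage, mem_Iic, mem_Ici]
      exact ⟨fun ⟨h, hθ⟩ ↦ (key θ hθ).1 h, fun h ↦ ⟨(key θ (hc.trans h)).2 h, hc.trans h⟩⟩
    rw [hset, hν _ hc, min_eq_right hs1, add_sub_cancel,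
      Real.rpow_inv_rpow hs.le (neg_ne_zero.2 hα.ne')]
  · have hset : (fun θ ↦ (1 + θ) ^ (-α)) ⁻¹' Iic s ∩ Ici 0 = Ici 0 := by
      refine inter_eq_right.2 fun θ hθ ↦ ?_
      exact (Real.rpow_le_one_of_one_le_of_nonpos (by linarith [mem_Ici.1 hθ]) (by linarith)).trans
        hs1.le
    rw [hset, min_eq_left hs1.le, ENNReal.ofReal_one]
    exact (prob_compl_eq_zero_iff measurableSet_Ici).1 (ae_nonneg_of_measure_Ici_eq hν)

lemma lintegral_one_add_rpow_neg {β : ℝ} (hα : 0 < α) (hβ : 0 ≤ β)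
    (hν : ∀ θ, 0 ≤ θ → ν (Ici θ) = ENNReal.ofReal ((1 + θ) ^ (-α))) :
    ∫⁻ θ, ENNReal.ofReal ((1 + θ) ^ (-β)) ∂ν = ENNReal.ofReal (α / (α + β)) := by
  have hg : Measurable fun θ : ℝ ↦ (1 + θ) ^ (-α) := by fun_prop
  calc ∫⁻ θ, ENNReal.ofReal ((1 + θ) ^ (-β)) ∂ν
      = ∫⁻ θ, ENNReal.ofReal (((1 + θ) ^ (-α)) ^ (β / α)) ∂ν := by
        refine lintegral_congr_ae ((ae_nonneg_of_measure_Ici_eq hν).mono fun θ hθ ↦ ?_)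
        dsimp only
        rw [← Real.rpow_mul (by linarith)]
        congr 2
        field_simp
    _ = ∫⁻ s in Ioc 0 1, ENNReal.ofReal (s ^ (β / α)) := by
        rw [← map_one_add_rpow_neg_eq_restrict_Ioc hα hν, lintegral_map (by fun_prop) hg]
    _ = ENNReal.ofReal (∫ s in Ioc 0 1, s ^ (β / α)) := by
        rw [ofReal_integral_eq_lintegral_ofReal]
        · exact (intervalIntegral.intervalIntegrable_rpow' (by linarith [div_nonneg hβ hα.le])).1
        · exact (ae_restrict_iff' measurableSet_Ioc).2 (ae_of_all _ fun s hs ↦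
            Real.rpow_nonneg hs.1.le _)
    _ = ENNReal.ofReal (α / (α + β)) := by
        rw [← intervalIntegral.integral_of_le zero_le_one,
          integral_rpow (Or.inl (by linarith [div_nonneg hβ hα.le])), Real.one_rpow,
          Real.zero_rpow (by positivity)]
        congr 1
        field_simp
        ring

end Lomax

theorem stmt_12_general {Ω : Type*} [MeasurableSpace Ω] (μ : Measure Ω)
    {ι : Type*} [Fintype ι]
    (k : ι → ℕ) (hk : ∀ v, 2 ≤ k v)
    (L : ℕ)
    (hLsum : (L : ℝ) - 1 = ∑ v : ι, ((k v : ℝ) - 1))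
    (ξ : ι → Ω → ℝ) (hmeas : ∀ v, Measurable (ξ v))
    (hindep : iIndepFun ξ μ)
    (hdist : ∀ v, ∀ θ : ℝ, 0 ≤ θ →
      μ {ω | θ ≤ ξ v ω} = ENNReal.ofReal ((1 + θ) ^ ((1 : ℝ) - (k v : ℝ))))
    (u : ι) :
    μ {ω | ∀ v, ξ u ω ≤ ξ v ω} = ENNReal.ofReal (((k u : ℝ) - 1) / ((L : ℝ) - 1)) := by
  classical
  have hk_gt_one (v : ι) : (1 : ℝ) < k v := by exact_mod_cast hk v
  have htail (v : ι) (θ : ℝ) (hθ : 0 ≤ θ) :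
      μ {ω | θ ≤ ξ v ω} = ENNReal.ofReal ((1 + θ) ^ (-((k v : ℝ) - 1))) := by
    rw [hdist v θ hθ, neg_sub]
  have hlaw (θ : ℝ) (hθ : 0 ≤ θ) :
      μ.map (ξ u) (Ici θ) = ENNReal.ofReal ((1 + θ) ^ (-((k u : ℝ) - 1))) := by
    rw [Measure.map_apply (hmeas u) measurableSet_Ici]
    exact htail u θ hθ
  have := hindep.isProbabilityMeasure
  have := Measure.isProbabilityMeasure_map (μ := μ) (hmeas u).aemeasurable
  rw [hindep.measure_forall_le_eq_lintegral hmeas u, hLsum,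
    ← Finset.add_sum_erase _ _ (Finset.mem_univ u),
    ← lintegral_one_add_rpow_neg (by linarith [hk_gt_one u])
      (Finset.sum_nonneg fun v _ ↦ by linarith [hk_gt_one v]) hlaw]
  refine lintegral_congr_ae ((ae_nonneg_of_measure_Ici_eq hlaw).mono fun θ hθ ↦ ?_)
  dsimp only
  rw [Finset.prod_congr rfl fun v _ ↦ htail v θ hθ,
    ← ENNReal.ofReal_prod_of_nonneg fun v _ ↦ by positivity,
    ← Real.rpow_sum_of_pos (by linarith), Finset.sum_neg_distrib]

/-- Pruning at nodes: for a finite tree whose internal nodes `v : ι` have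
`k v ≥ 2` children and `L ≥ 2` leaves (so that `L - 1 = ∑ (k v - 1)`), if the
marks `ξ v` are independent with `P(ξ v ≥ θ) = (1+θ)^(1 - k v)`, then the
probability that the node `u` carries the smallest mark is `(k u - 1)/(L - 1)`. -/
theorem stmt_12 {Ω : Type*} [MeasurableSpace Ω] (μ : Measure Ω) [IsProbabilityMeasure μ]
    {ι : Type*} [Fintype ι] [Nonempty ι]
    (k : ι → ℕ) (hk : ∀ v, 2 ≤ k v)
    (L : ℕ) (hL : 2 ≤ L)
    (hLsum : (L : ℝ) - 1 = ∑ v : ι, ((k v : ℝ) - 1))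
    (ξ : ι → Ω → ℝ) (hmeas : ∀ v, Measurable (ξ v))
    (hindep : iIndepFun ξ μ)
    (hdist : ∀ v, ∀ θ : ℝ, 0 ≤ θ →
      μ {ω | θ ≤ ξ v ω} = ENNReal.ofReal ((1 + θ) ^ ((1 : ℝ) - (k v : ℝ))))
    (u : ι) :
    μ {ω | ∀ v, ξ u ω ≤ ξ v ω} = ENNReal.ofReal (((k u : ℝ) - 1) / ((L : ℝ) - 1)) :=
  stmt_12_general μ k hk L hLsum ξ hmeas hindep hdist u
end

section
/- Let α ∈ (0,1). The function φ_α(r) = (1-α) r ∫₀¹ (1/(1-(1-x)^α)) · (1/(1-rx)^α - 1) dx is well-defined for r ∈ [0,1), satisfies φ_α(0) = 0, has nonnegative Taylor coefficients at 0, and φ_α(r) ≤ 1 for r ∈ [0,1). -/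
/-!
Expanding `1 / (1 - r x) ^ α - 1` in the binomial series, whose coefficients are nonnegative,
and integrating term by term exhibits `φ_α` as a power series with nonnegative coefficients
on `(-1, 1)`; the termwise integrals are the moments `∫₀¹ x ^ k / (1 - (1 - x) ^ α)`, `k ≥ 1`,
which are at most `1 / α` because `1 - (1 - x) ^ α ≥ α x` (Bernoulli).
For `0 ≤ r ≤ 1` the integrand is at most its value at `r = 1`, namely `(1 - x) ^ (-α)`, whose
integral is `1 / (1 - α)`; hence `φ_α(r) ≤ r`.
-/

open Real MeasureTheory Filter Topology FormalMultilinearSeries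
open scoped ENNReal NNReal

theorem hasFPowerSeriesAt_ofScalars_of_eventually_hasSum {f : ℝ → ℝ} {a : ℕ → ℝ}
    (h : ∀ᶠ r in 𝓝 0, HasSum (fun n => a n * r ^ n) (f r)) :
    HasFPowerSeriesAt f (ofScalars ℝ a) 0 := by
  obtain ⟨ε, hε, hball⟩ := Metric.eventually_nhds_iff.mp h
  obtain ⟨ρ, hρ0, hρε⟩ : ∃ ρ : ℝ≥0, 0 < ρ ∧ (ρ : ℝ) < ε :=
    ⟨⟨ε / 2, by positivity⟩, NNReal.coe_pos.1 (half_pos hε), half_lt_self hε⟩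
  have hρ : (ρ : ℝ≥0∞) ≤ (ofScalars ℝ a).radius := by
    refine le_radius_of_tendsto _ (l := 0) ?_
    have hsum := hball (y := ρ) (by simpa using hρε)
    simpa [ofScalars_norm, norm_mul] using hsum.summable.tendsto_atTop_zero.norm
  refine ((ofScalars ℝ a).hasFPowerSeriesOnBall
    ((ENNReal.coe_pos.2 hρ0).trans_le hρ)).hasFPowerSeriesAt.congr ?_
  filter_upwards [h] with r hr
  simp only [FormalMultilinearSeries.sum, ofScalars_apply_eq, smul_eq_mul, hr.tsum_eq]

theorem HasFPowerSeriesAt.iteratedDeriv_eq_factorial_mul {𝕜 : Type*} [NontriviallyNormedField 𝕜]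
    [CompleteSpace 𝕜] [CharZero 𝕜] {f : 𝕜 → 𝕜} {a : ℕ → 𝕜} {x : 𝕜}
    (h : HasFPowerSeriesAt f (ofScalars 𝕜 a) x) (n : ℕ) :
    iteratedDeriv n f x = n.factorial * a n := by
  have hcoeff := congrArg (fun p : FormalMultilinearSeries 𝕜 𝕜 𝕜 => p n (fun _ => 1))
    (h.analyticAt.hasFPowerSeriesAt.eq_formalMultilinearSeries h)
  simp only [ofScalars_apply_eq, one_pow, smul_eq_mul, mul_one] at hcoeff
  rw [← hcoeff, mul_div_cancel₀ _ (Nat.cast_ne_zero.2 n.factorial_ne_zero)]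

theorem ascPochhammer_eval_nonneg {S : Type*} [CommSemiring S] [PartialOrder S]
    [IsOrderedRing S] {a : S} (ha : 0 ≤ a) (n : ℕ) : 0 ≤ (ascPochhammer S n).eval a := by
  induction n with
  | zero => simp
  | succ n ih => rw [ascPochhammer_succ_eval]; exact mul_nonneg ih (add_nonneg ha n.cast_nonneg)

theorem Ring.choose_add_natCast_sub_one_nonneg {a : ℝ} (ha : 0 ≤ a) (n : ℕ) :
    0 ≤ Ring.choose (a + n - 1) n := by
  have h := Ring.factorial_nsmul_multichoose_eq_ascPochhammer a n
  rw [Ring.multichoose_eq, Polynomial.ascPochhammer_smeval_eq_eval, nsmul_eq_mul] at h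
  have := ascPochhammer_eval_nonneg ha n
  rw [← h] at this
  exact nonneg_of_mul_nonneg_right this (by positivity)

theorem hasSum_choose_mul_pow_one_div_one_sub_rpow (a : ℝ) {y : ℝ} (hy : |y| < 1) :
    HasSum (fun n : ℕ => Ring.choose (a + n - 1) n * y ^ n) (1 / (1 - y) ^ a) := by
  have hy' : y ∈ Metric.eball (0 : ℝ) 1 := by
    simpa [Metric.mem_eball, edist_dist, Real.dist_eq] using hy
  simpa [ofScalars_apply_eq, mul_comm] using
    (one_div_one_sub_rpow_hasFPowerSeriesOnBall_zero a).hasSum hy'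

theorem hasSum_choose_mul_pow_succ_one_div_one_sub_rpow_sub_one (a : ℝ) {y : ℝ} (hy : |y| < 1) :
    HasSum (fun n : ℕ => Ring.choose (a + n) (n + 1) * y ^ (n + 1)) (1 / (1 - y) ^ a - 1) := by
  have h := (hasSum_nat_add_iff' 1).mpr (hasSum_choose_mul_pow_one_div_one_sub_rpow a hy)
  simpa [add_sub_assoc] using h

theorem mul_le_one_sub_one_sub_rpow {α x : ℝ} (hα0 : 0 ≤ α) (hα1 : α ≤ 1) (hx : x ≤ 1) :
    α * x ≤ 1 - (1 - x) ^ α := by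
  have h := rpow_one_add_le_one_add_mul_self (s := -x) (by linarith) hα0 hα1
  rw [← sub_eq_add_neg] at h
  linarith

theorem norm_pow_succ_div_one_sub_one_sub_rpow_le {α x : ℝ} (hα0 : 0 < α) (hα1 : α ≤ 1)
    (hx0 : 0 < x) (hx1 : x ≤ 1) (n : ℕ) : ‖x ^ (n + 1) / (1 - (1 - x) ^ α)‖ ≤ α⁻¹ := by
  have hD := mul_le_one_sub_one_sub_rpow hα0.le hα1 hx1
  have hαx : 0 < α * x := by positivity
  rw [norm_div, norm_pow, norm_of_nonneg hx0.le, norm_of_nonneg (hαx.le.trans hD),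
    div_le_iff₀ (hαx.trans_le hD)]
  calc x ^ (n + 1) ≤ x := pow_le_of_le_one hx0.le hx1 n.succ_ne_zero
    _ = α⁻¹ * (α * x) := by field_simp
    _ ≤ α⁻¹ * (1 - (1 - x) ^ α) := by gcongr

theorem integrableOn_pow_succ_div_one_sub_one_sub_rpow {α : ℝ} (hα0 : 0 < α) (hα1 : α ≤ 1)
    (n : ℕ) : IntegrableOn (fun x : ℝ => x ^ (n + 1) / (1 - (1 - x) ^ α)) (Set.Ioc 0 1) :=
  Measure.integrableOn_of_bounded (M := α⁻¹) (by simp)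
    (Measurable.aestronglyMeasurable (by fun_prop))
    ((ae_restrict_iff' measurableSet_Ioc).mpr <| .of_forall fun _ hx =>
      norm_pow_succ_div_one_sub_one_sub_rpow_le hα0 hα1 hx.1 hx.2 n)

noncomputable def phiIntegrand (α r x : ℝ) : ℝ :=
  (1 / (1 - (1 - x) ^ α)) * (1 / (1 - r * x) ^ α - 1)

theorem hasSum_phiIntegrand (α : ℝ) {r x : ℝ} (hr : |r| < 1) (hx0 : 0 ≤ x) (hx1 : x ≤ 1) :
    HasSum (fun n : ℕ => Ring.choose (α + n) (n + 1) * r ^ (n + 1) *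
      (x ^ (n + 1) / (1 - (1 - x) ^ α))) (phiIntegrand α r x) := by
  have hrx : |r * x| < 1 := by
    rw [abs_mul, abs_of_nonneg hx0]
    nlinarith [abs_nonneg r]
  refine ((hasSum_choose_mul_pow_succ_one_div_one_sub_rpow_sub_one α hrx).mul_left
    (1 / (1 - (1 - x) ^ α))).congr_fun fun n => ?_
  ring

theorem hasSum_integral_phiIntegrand {α r : ℝ} (hα0 : 0 < α) (hα1 : α ≤ 1) (hr : |r| < 1) :
    HasSum (fun n : ℕ => Ring.choose (α + n) (n + 1) * r ^ (n + 1) *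
      ∫ x in Set.Ioc 0 1, x ^ (n + 1) / (1 - (1 - x) ^ α)) (∫ x in 0..1, phiIntegrand α r x) := by
  set F : ℕ → ℝ → ℝ := fun n x =>
    Ring.choose (α + n) (n + 1) * r ^ (n + 1) * (x ^ (n + 1) / (1 - (1 - x) ^ α))
  have hF_int (n : ℕ) : IntegrableOn (F n) (Set.Ioc 0 1) :=
    (integrableOn_pow_succ_div_one_sub_one_sub_rpow hα0 hα1 n).const_mul _
  have hF_le (n : ℕ) : ∫ x in Set.Ioc 0 1, ‖F n x‖ ≤
      Ring.choose (α + n) (n + 1) * ‖r‖ ^ (n + 1) * α⁻¹ := by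
    have hc : 0 ≤ Ring.choose (α + n) (n + 1) := by
      simpa [add_sub_assoc] using Ring.choose_add_natCast_sub_one_nonneg hα0.le (n + 1)
    refine (le_abs_self _).trans ?_
    simpa using norm_setIntegral_le_of_norm_le_const (μ := volume) (s := Set.Ioc (0:ℝ) 1)
      (f := fun x => ‖F n x‖) (C := Ring.choose (α + n) (n + 1) * ‖r‖ ^ (n + 1) * α⁻¹)
      (by simp) fun x hx => by
        simp only [F, norm_norm, norm_mul, norm_pow, norm_of_nonneg hc]
        gcongr
        exact norm_pow_succ_div_one_sub_one_sub_rpow_le hα0 hα1 hx.1 hx.2 n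
  have hF_sum : Summable fun n => ∫ x in Set.Ioc 0 1, ‖F n x‖ := by
    refine Summable.of_nonneg_of_le (fun n => integral_nonneg fun _ => norm_nonneg _) hF_le ?_
    exact ((hasSum_choose_mul_pow_succ_one_div_one_sub_rpow_sub_one α
      (by rwa [norm_eq_abs, abs_abs])).summable.mul_right _)
  have hsum := hasSum_integral_of_summable_integral_norm hF_int hF_sum
  rw [intervalIntegral.integral_of_le zero_le_one]
  rw [setIntegral_congr_fun measurableSet_Ioc fun x hx =>
      ((hasSum_phiIntegrand α hr hx.1.le hx.2).tsum_eq).symm]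
  exact hsum.congr_fun fun n => (integral_const_mul _ _).symm

noncomputable def phiCoeff (α : ℝ) : ℕ → ℝ
  | 0 => 0
  | 1 => 0
  | n + 2 => (1 - α) * (Ring.choose (α + n) (n + 1) *
      ∫ x in Set.Ioc 0 1, x ^ (n + 1) / (1 - (1 - x) ^ α))

theorem phiCoeff_nonneg {α : ℝ} (hα0 : 0 ≤ α) (hα1 : α ≤ 1) : ∀ n, 0 ≤ phiCoeff α n
  | 0 | 1 => le_rfl
  | n + 2 => by
    have hc : 0 ≤ Ring.choose (α + n) (n + 1) := by
      simpa [add_sub_assoc] using Ring.choose_add_natCast_sub_one_nonneg hα0 (n + 1)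
    refine mul_nonneg (sub_nonneg.2 hα1) (mul_nonneg hc ?_)
    refine setIntegral_nonneg measurableSet_Ioc fun x hx => div_nonneg (pow_nonneg hx.1.le _) ?_
    have := mul_le_one_sub_one_sub_rpow hα0 hα1 hx.2
    nlinarith [hx.1]

theorem hasSum_phiCoeff {α r : ℝ} (hα0 : 0 < α) (hα1 : α ≤ 1) (hr : |r| < 1) :
    HasSum (fun n => phiCoeff α n * r ^ n) ((1 - α) * r * ∫ x in 0..1, phiIntegrand α r x) := by
  refine (hasSum_nat_add_iff' 2).mp ?_
  simp only [Finset.sum_range_succ, Finset.sum_range_zero, phiCoeff, zero_mul, add_zero,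
    sub_zero]
  exact ((hasSum_integral_phiIntegrand hα0 hα1 hr).mul_left ((1 - α) * r)).congr_fun
    fun n => by ring

theorem phiIntegrand_nonneg {α r x : ℝ} (hα : 0 ≤ α) (hr : r ∈ Set.Icc 0 1)
    (hx : x ∈ Set.Ioo 0 1) : 0 ≤ phiIntegrand α r x := by
  obtain ⟨hr0, hr1⟩ := hr
  obtain ⟨hx0, hx1⟩ := hx
  have hrx : 0 < 1 - r * x := by nlinarith
  have hD : (1 - x) ^ α ≤ 1 := rpow_le_one (by linarith) (by linarith) hα
  refine mul_nonneg (div_nonneg zero_le_one (by linarith)) (sub_nonneg.2 ?_)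
  rw [le_div_iff₀ (rpow_pos_of_pos hrx α), one_mul]
  exact rpow_le_one hrx.le (by nlinarith) hα

theorem phiIntegrand_le_one_sub_rpow_neg {α r x : ℝ} (hα : 0 < α) (hr : r ≤ 1)
    (hx : x ∈ Set.Ioo 0 1) : phiIntegrand α r x ≤ (1 - x) ^ (-α) := by
  obtain ⟨hx0, hx1⟩ := hx
  have hD : 0 < 1 - (1 - x) ^ α := sub_pos.2 (rpow_lt_one (by linarith) (by linarith) hα)
  have hmono : (1 - x) ^ α ≤ (1 - r * x) ^ α := rpow_le_rpow (by linarith) (by nlinarith) hα.le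
  calc phiIntegrand α r x ≤ (1 / (1 - (1 - x) ^ α)) * (1 / (1 - x) ^ α - 1) := by
        unfold phiIntegrand
        gcongr
    _ = (1 - x) ^ (-α) := by
        rw [rpow_neg (by linarith)]
        field_simp

theorem intervalIntegrable_one_sub_rpow_neg {α : ℝ} (hα : α < 1) :
    IntervalIntegrable (fun x : ℝ => (1 - x) ^ (-α)) volume 0 1 := by
  simpa using ((intervalIntegral.intervalIntegrable_rpow' (r := -α) (by linarith)).comp_sub_left
    (a := (0 : ℝ)) (b := 1) 1).symm

theorem integral_one_sub_rpow_neg {α : ℝ} (hα : α < 1) :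
    ∫ x in 0..1, (1 - x) ^ (-α) = 1 / (1 - α) := by
  rw [intervalIntegral.integral_comp_sub_left (fun u : ℝ => u ^ (-α)),
    integral_rpow (Or.inl (by linarith))]
  simp only [sub_self, sub_zero, one_rpow, zero_rpow (by linarith : -α + 1 ≠ 0)]
  ring

theorem intervalIntegrable_phiIntegrand {α r : ℝ} (hα0 : 0 < α) (hα1 : α < 1)
    (hr : r ∈ Set.Icc 0 1) : IntervalIntegrable (phiIntegrand α r) volume 0 1 := by
  rw [intervalIntegrable_iff_integrableOn_Ioo_of_le zero_le_one]
  refine Integrable.mono' ((intervalIntegrable_iff_integrableOn_Ioo_of_le zero_le_one).mp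
    (intervalIntegrable_one_sub_rpow_neg hα1)) (Measurable.aestronglyMeasurable ?_) ?_
  · unfold phiIntegrand
    fun_prop
  filter_upwards [ae_restrict_mem measurableSet_Ioo] with x hx
  rw [norm_of_nonneg (phiIntegrand_nonneg hα0.le hr hx)]
  exact phiIntegrand_le_one_sub_rpow_neg hα0 hr.2 hx

theorem integral_phiIntegrand_le {α r : ℝ} (hα0 : 0 < α) (hα1 : α < 1)
    (hr : r ∈ Set.Icc 0 1) :
    ∫ x in 0..1, phiIntegrand α r x ≤ 1 / (1 - α) := by
  rw [← integral_one_sub_rpow_neg hα1]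
  exact intervalIntegral.integral_mono_on_of_le_Ioo zero_le_one
    (intervalIntegrable_phiIntegrand hα0 hα1 hr) (intervalIntegrable_one_sub_rpow_neg hα1)
    fun x hx => phiIntegrand_le_one_sub_rpow_neg hα0 hr.2 hx

theorem stmt_15 (α : ℝ) (hα : α ∈ Set.Ioo (0:ℝ) 1)
    (φ : ℝ → ℝ)
    (hφ : ∀ r, φ r = (1 - α) * r *
        ∫ x in (0:ℝ)..1, (1 / (1 - (1 - x) ^ α)) * (1 / (1 - r * x) ^ α - 1)) :
    (∀ r ∈ Set.Ico (0:ℝ) 1,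
        IntervalIntegrable
          (fun x => (1 / (1 - (1 - x) ^ α)) * (1 / (1 - r * x) ^ α - 1))
          volume 0 1)
      ∧ φ 0 = 0
      ∧ (∀ n : ℕ, 0 ≤ iteratedDeriv n φ 0)
      ∧ ∀ r ∈ Set.Ico (0:ℝ) 1, φ r ≤ 1 := by
  obtain ⟨hα0, hα1⟩ := hα
  have hφ_series : ∀ᶠ r in 𝓝 0, HasSum (fun n => phiCoeff α n * r ^ n) (φ r) := by
    filter_upwards [Ioo_mem_nhds neg_one_lt_zero zero_lt_one] with r hr
    rw [hφ r]
    exact hasSum_phiCoeff hα0 hα1.le (abs_lt.2 hr)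
  refine ⟨fun r hr => intervalIntegrable_phiIntegrand hα0 hα1 (Set.Ico_subset_Icc_self hr),
    by simp [hφ], fun n => ?_, fun r hr => ?_⟩
  · rw [(hasFPowerSeriesAt_ofScalars_of_eventually_hasSum hφ_series).iteratedDeriv_eq_factorial_mul]
    exact mul_nonneg (by positivity) (phiCoeff_nonneg hα0.le hα1.le n)
  · calc φ r ≤ (1 - α) * r * (1 / (1 - α)) := by
          rw [hφ r]
          gcongr
          · exact mul_nonneg (sub_nonneg.2 hα1.le) hr.1
          · exact integral_phiIntegrand_le hα0 hα1 (Set.Ico_subset_Icc_self hr)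
      _ = r := by field_simp
      _ ≤ 1 := hr.2.le
end

section
/- For n ∈ ℕ*, one has -(1/n)∫₀¹ x^n/log(1-x) dx = (1/n)∫₀^∞ (1-e^{-v})^n e^{-v} dv/v = (1/n) Σ_{k=1}^n C(n,k) (-1)^{k+1} log(k+1). -/
/-!
Substituting `x = 1 - e^{-v}` turns the first integral into the second. For the second, expand
`(1 - e^{-v})^n e^{-v}` binomially; since the alternating sum of binomial coefficients vanishes
for `n ≠ 0`, it equals `∑ₖ C(n,k) (-1)^(k+1) (e^{-v} - e^{-(k+1)v})`, and each term integrates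
against `dv / v` to `log (k + 1)` by Frullani's integral.
-/

open Real MeasureTheory Set

theorem one_sub_pow_mul_eq_sum_Icc {R : Type*} [CommRing R] {n : ℕ} (hn : n ≠ 0) (y : R) :
    (1 - y) ^ n * y
      = ∑ k ∈ Finset.Icc 1 n, (n.choose k : R) * (-1) ^ (k + 1) * (y - y ^ (k + 1)) := by
  have expand (z : R) :
      (1 - z) ^ n = ∑ k ∈ Finset.range (n + 1), (n.choose k : R) * (-1) ^ k * z ^ k := by
    rw [sub_eq_neg_add, add_pow]
    refine Finset.sum_congr rfl fun k _ => ?_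
    rw [neg_pow, one_pow]
    ring
  calc (1 - y) ^ n * y = (1 - y) ^ n * y - (1 - 1) ^ n * y := by simp [hn]
    _ = ∑ k ∈ Finset.range (n + 1), (n.choose k : R) * (-1) ^ (k + 1) * (y - y ^ (k + 1)) := by
      simp only [expand, Finset.sum_mul, ← Finset.sum_sub_distrib]
      refine Finset.sum_congr rfl fun k _ => ?_
      ring
    _ = _ := by
      refine (Finset.sum_subset (fun k hk => ?_) fun k hk hk' => ?_).symm
      · simp only [Finset.mem_Icc, Finset.mem_range] at hk ⊢
        omega
      · obtain rfl : k = 0 := by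
          simp only [Finset.mem_Icc, Finset.mem_range, not_and_or] at hk hk'
          omega
        simp

theorem integrableOn_exp_neg_mul_sub_exp_neg_mul_div {a b : ℝ} (ha : 0 < a) (hb : 0 < b) :
    IntegrableOn (fun v => (exp (-(a * v)) - exp (-(b * v))) / v) (Ioi 0) := by
  wlog hab : a ≤ b generalizing a b
  · convert (this hb ha (le_of_not_ge hab)).neg using 1
    ext v
    simp only [Pi.neg_apply]
    ring
  -- `e^{-av} - e^{-bv} = e^{-av} (1 - e^{-(b-a)v}) ≤ (b - a) v e^{-av}`
  refine Integrable.mono' ((exp_neg_integrableOn_Ioi 0 ha).const_mul (b - a)) ?_ ?_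
  · exact (by fun_prop : Measurable _).aestronglyMeasurable
  · refine (ae_restrict_iff' measurableSet_Ioi).mpr (ae_of_all _ fun v (hv : 0 < v) => ?_)
    have hle : exp (-(b * v)) ≤ exp (-(a * v)) := exp_le_exp.mpr (by nlinarith)
    have hsplit : exp (-(b * v)) = exp (-(a * v)) * exp (-((b - a) * v)) := by
      rw [← exp_add]; ring_nf
    have := one_sub_le_exp_neg ((b - a) * v)
    rw [Real.norm_eq_abs, abs_of_nonneg (div_nonneg (sub_nonneg.mpr hle) hv.le),
      div_le_iff₀ hv, hsplit, neg_mul]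
    nlinarith [exp_pos (-(a * v))]

theorem integral_exp_neg_mul_sub_exp_neg_mul_div {a b : ℝ} (ha : 0 < a) (hb : 0 < b) :
    ∫ v in Ioi 0, (exp (-(a * v)) - exp (-(b * v))) / v = log (b / a) := by
  have hcont : Continuous fun x : ℝ => exp (-x) := by fun_prop
  have key := Frullani.integral_Ioi_eq (f := fun x : ℝ => exp (-x)) (L := 1) (R := 0)
    (hcont.locallyIntegrable.locallyIntegrableOn _) ha hb
    (by simpa using hcont.continuousWithinAt.tendsto (x := 0) (s := Ioi 0))
    (by simpa using tendsto_exp_neg_atTop_nhds_zero)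
    (by simpa only [smul_eq_mul, inv_mul_eq_div]
      using integrableOn_exp_neg_mul_sub_exp_neg_mul_div ha hb)
  simpa only [smul_eq_mul, inv_mul_eq_div, sub_zero, mul_one] using key

theorem image_one_sub_exp_neg_Ioi : (fun v : ℝ => 1 - exp (-v)) '' Ioi 0 = Ioo 0 1 := by
  ext x
  constructor
  · rintro ⟨v, hv, rfl⟩
    have : exp (-v) < 1 := exp_lt_one_iff.mpr (neg_lt_zero.mpr hv)
    exact ⟨by linarith, by linarith [exp_pos (-v)]⟩
  · rintro ⟨hx0, hx1⟩
    refine ⟨-log (1 - x), neg_pos.mpr (log_neg (by linarith) (by linarith)), ?_⟩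
    simp only [neg_neg, exp_log (sub_pos.mpr hx1), sub_sub_cancel]

theorem integral_zero_one_eq_integral_Ioi_one_sub_exp_neg {E : Type*} [NormedAddCommGroup E]
    [NormedSpace ℝ E] (g : ℝ → E) :
    ∫ x in (0:ℝ)..1, g x = ∫ v in Ioi 0, exp (-v) • g (1 - exp (-v)) := by
  have hderiv : ∀ v ∈ Ioi (0:ℝ),
      HasDerivWithinAt (fun v => 1 - exp (-v)) (exp (-v)) (Ioi 0) v := fun v _ => by
    simpa using ((hasDerivAt_neg v).exp.const_sub 1).hasDerivWithinAt
  have hinj : InjOn (fun v : ℝ => 1 - exp (-v)) (Ioi 0) := fun a _ b _ h => by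
    simpa using h
  rw [intervalIntegral.integral_of_le zero_le_one, integral_Ioc_eq_integral_Ioo,
    ← image_one_sub_exp_neg_Ioi,
    integral_image_eq_integral_abs_deriv_smul measurableSet_Ioi hderiv hinj]
  simp only [abs_exp]

theorem integral_pow_div_log_one_sub (n : ℕ) :
    ∫ x in (0:ℝ)..1, x ^ n / log (1 - x)
      = -∫ v in Ioi 0, (1 - exp (-v)) ^ n * exp (-v) / v := by
  rw [integral_zero_one_eq_integral_Ioi_one_sub_exp_neg, ← integral_neg]
  congr 1 with v
  rw [sub_sub_cancel, log_exp, smul_eq_mul]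
  ring

theorem integral_one_sub_exp_neg_pow_mul_exp_neg_div {n : ℕ} (hn : n ≠ 0) :
    ∫ v in Ioi 0, (1 - exp (-v)) ^ n * exp (-v) / v
      = ∑ k ∈ Finset.Icc 1 n, (n.choose k : ℝ) * (-1) ^ (k + 1) * log ((k : ℝ) + 1) := by
  have hk (k : ℕ) : (0 : ℝ) < k + 1 := k.cast_add_one_pos
  have hexpand (v : ℝ) : (1 - exp (-v)) ^ n * exp (-v) / v
      = ∑ k ∈ Finset.Icc 1 n, (n.choose k : ℝ) * (-1) ^ (k + 1)
          * ((exp (-(1 * v)) - exp (-((k + 1) * v))) / v) := by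
    rw [one_sub_pow_mul_eq_sum_Icc hn, Finset.sum_div]
    refine Finset.sum_congr rfl fun k _ => ?_
    rw [one_mul, ← exp_nat_mul, mul_div_assoc]
    push_cast
    ring_nf
  simp only [hexpand]
  rw [integral_finsetSum _ fun k _ =>
    (integrableOn_exp_neg_mul_sub_exp_neg_mul_div one_pos (hk k)).const_mul _]
  refine Finset.sum_congr rfl fun k _ => ?_
  rw [integral_const_mul, integral_exp_neg_mul_sub_exp_neg_mul_div one_pos (hk k), div_one]

theorem stmt_16 (n : ℕ) (hn : 1 ≤ n) :
    (-(1 / (n : ℝ)) * ∫ x in (0:ℝ)..1, x ^ n / Real.log (1 - x)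
        = (1 / (n : ℝ)) * ∫ v in Set.Ioi (0:ℝ), (1 - Real.exp (-v)) ^ n * Real.exp (-v) / v)
      ∧ (1 / (n : ℝ)) * ∫ v in Set.Ioi (0:ℝ), (1 - Real.exp (-v)) ^ n * Real.exp (-v) / v
        = (1 / (n : ℝ)) * ∑ k ∈ Finset.Icc 1 n,
            (n.choose k : ℝ) * (-1) ^ (k + 1) * Real.log ((k : ℝ) + 1) := by
  refine ⟨?_, ?_⟩
  · rw [integral_pow_div_log_one_sub, mul_neg, neg_mul, neg_neg]
  · rw [integral_one_sub_exp_neg_pow_mul_exp_neg_div (Nat.one_le_iff_ne_zero.mp hn)]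
end

section
/- Let α ∈ (0,1), θ ≥ 0, and g_θ(r) = r + α((1-r+θ)^(1/α) - θ^(1/α))/(1+θ)^((1/α)-1). Define h_θ(r) = (1+θ)·[1 - (1 - r(1 - (θ/(1+θ))^(1/α)))^α]. Then g_θ(h_θ(r)) - h_θ(r) = g_θ(0)(1-r) for all r ∈ [0,1]. -/
/-! With `c = (θ / (1 + θ)) ^ (1 / α)`, the map `h_θ` is built so that `1 - h_θ r + θ` is
`(1 + θ) (1 - r (1 - c)) ^ α`; after taking `1 / α`-th powers and writing `θ ^ (1 / α)` as
`(1 + θ) ^ (1 / α) c`, both sides become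
`α (1 + θ) ^ (1 / α) (1 - c) (1 - r) / (1 + θ) ^ (1 / α - 1)`. -/

open Real

lemma mul_rpow_rpow_one_div {s u α : ℝ} (hs : 0 ≤ s) (hu : 0 ≤ u) (hα : α ≠ 0) :
    (s * u ^ α) ^ (1 / α) = s ^ (1 / α) * u := by
  rw [mul_rpow hs (rpow_nonneg hu _), one_div, rpow_rpow_inv hu hα]

lemma rpow_eq_rpow_mul_rpow_div {t s p : ℝ} (ht : 0 ≤ t) (hs : 0 < s) :
    t ^ p = s ^ p * (t / s) ^ p := by
  rw [div_rpow ht hs.le, mul_div_cancel₀ _ (rpow_pos_of_pos hs p).ne']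

theorem stmt_19 (α : ℝ) (hα : α ∈ Set.Ioo (0:ℝ) 1) (θ : ℝ) (hθ : 0 ≤ θ)
    (gθ hθfun : ℝ → ℝ)
    (hg : ∀ r, gθ r = r + α * ((1 - r + θ) ^ (1 / α) - θ ^ (1 / α)) / (1 + θ) ^ (1 / α - 1))
    (hh : ∀ r, hθfun r = (1 + θ) * (1 - (1 - r * (1 - (θ / (1 + θ)) ^ (1 / α))) ^ α)) :
    ∀ r ∈ Set.Icc (0:ℝ) 1, gθ (hθfun r) - hθfun r = gθ 0 * (1 - r) := by
  rintro r ⟨hr0, hr1⟩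
  have h1θ : 0 < 1 + θ := by linarith
  set c := (θ / (1 + θ)) ^ (1 / α)
  have hu : 0 ≤ 1 - r * (1 - c) := by nlinarith [show 0 ≤ c by positivity]
  have hshift : 1 - hθfun r + θ = (1 + θ) * (1 - r * (1 - c)) ^ α := by
    rw [hh]
    ring
  rw [hg, hg, hshift, mul_rpow_rpow_one_div h1θ.le hu hα.1.ne', sub_zero,
    rpow_eq_rpow_mul_rpow_div hθ h1θ]
  ring
end
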